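/- arXiv:2011.02648 — 4 statements merged into one kernel-verified Lean document; each statement's English description precedes it below -/
import Mathlib

section
/- Suppose vectors x̂_0,…,x̂_N ∈ ℝ^n, ŵ_0,…,ŵ_{N−1} ∈ ℝ^l and λ_0,…,λ_N ∈ ℝ^n satisfy the two-point boundary value problem: λ_N = 0; λ_{k−1} = Aᵀλ_k − CᵀR C x̂_k + CᵀR y_k for k = 1,…,N; x̂_0 = x̄_0 + P⁻¹Aᵀλ_0; x̂_{k+1} = A x̂_k + B Q⁻¹Bᵀλ_k and ŵ_k = Q⁻¹Bᵀλ_k for k = 0,…,N−1; and set v̂_k = y_k − C x̂_k. Then for every tuple (x̃_0,…,x̃_N, w̃_0,…,w̃_{N−1}, ṽ_1,…,ṽ_N) satisfying x̃_{k+1} = A x̃_k + B w̃_k for k = 0,…,N−1 and y_k = C x̃_k + ṽ_k for k = 1,…,N, one has ½[(x̃_0 − x̄_0)ᵀP(x̃_0 − x̄_0) + Σ_{k=0}^{N−1} w̃_kᵀQ w̃_k + Σ_{k=1}^{N} ṽ_kᵀR ṽ_k] ≥ ½[(x̂_0 − x̄_0)ᵀP(x̂_0 − x̄_0) + Σ_{k=0}^{N−1}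 ŵ_kᵀQ ŵ_k + Σ_{k=1}^{N} v̂_kᵀR v̂_k], with equality only if x̃_0 = x̂_0 and w̃_k = ŵ_k for all k. -/
/-!
Write a competing tuple as the smoothed one plus a perturbation `(dx, dw, dv)`; the perturbation
obeys the homogeneous equations `dx (k+1) = A dx k + B dw k`, `dv k = -C dx k`. Since the cost is
quadratic, it splits as cost of the smoothed tuple + 2 · cross term + cost of the perturbation.
The costate equations turn the cross term into a telescoping sum equal to `dx N ⬝ Aᵀ λ N = 0`,
and the perturbation cost is nonnegative, vanishing only if `dx 0 = 0` and `dw = 0`.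
-/

open Matrix Finset

variable {α : Type*} {ι κ ν : Type*}

theorem Matrix.PosSemidef.isSymm [Ring α] [PartialOrder α] [StarRing α] [TrivialStar α]
    {M : Matrix ι ι α} (hM : M.PosSemidef) : M.IsSymm :=
  isHermitian_iff_isSymm.mp hM.isHermitian

variable [Fintype ι] [Fintype κ] [Fintype ν]

theorem Matrix.mulVec_nonsing_inv_mulVec [CommRing α] [DecidableEq ι] {M : Matrix ι ι α}
    (hM : IsUnit M) (v : ι → α) : M *ᵥ (M⁻¹ *ᵥ v) = v := by
  rw [mulVec_mulVec, M.mul_nonsing_inv ((isUnit_iff_isUnit_det M).mp hM), one_mulVec]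

theorem Matrix.IsSymm.add_dotProduct_mulVec_add [CommRing α] {M : Matrix ι ι α} (hM : M.IsSymm)
    (a d : ι → α) :
    (a + d) ⬝ᵥ M *ᵥ (a + d) = a ⬝ᵥ M *ᵥ a + 2 * (d ⬝ᵥ M *ᵥ a) + d ⬝ᵥ M *ᵥ d := by
  have hsymm : a ⬝ᵥ M *ᵥ d = d ⬝ᵥ M *ᵥ a := by
    rw [← dotProduct_transpose_mulVec, hM.eq]
  rw [mulVec_add, dotProduct_add, add_dotProduct, add_dotProduct, hsymm]
  ring

theorem Matrix.PosDef.eq_zero_of_dotProduct_mulVec_self_eq_zero {M : Matrix ι ι ℝ}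
    (hM : M.PosDef) {x : ι → ℝ} (h : x ⬝ᵥ M *ᵥ x = 0) : x = 0 := by
  by_contra hx
  simpa [h] using hM.dotProduct_mulVec_pos hx

theorem Matrix.PosSemidef.dotProduct_mulVec_self_nonneg {M : Matrix ι ι ℝ} (hM : M.PosSemidef)
    (x : ι → ℝ) : 0 ≤ x ⬝ᵥ M *ᵥ x := by
  simpa using hM.dotProduct_mulVec_nonneg x

/-- Summation by parts along a trajectory of `x (k+1) = A x k + B w k`. -/
theorem sum_range_dotProduct_adjoint_eq [CommRing α] {A : Matrix ι ι α} {B : Matrix ι κ α}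
    {N : ℕ} {x : ℕ → ι → α} {w : ℕ → κ → α} (hx : ∀ k < N, x (k + 1) = A *ᵥ x k + B *ᵥ w k)
    (lam : ℕ → ι → α) :
    x 0 ⬝ᵥ Aᵀ *ᵥ lam 0
        + ∑ k ∈ range N, (w k ⬝ᵥ Bᵀ *ᵥ lam k + x (k + 1) ⬝ᵥ (Aᵀ *ᵥ lam (k + 1) - lam k))
      = x N ⬝ᵥ Aᵀ *ᵥ lam N := by
  have step : ∀ k ∈ range N,
      w k ⬝ᵥ Bᵀ *ᵥ lam k + x (k + 1) ⬝ᵥ (Aᵀ *ᵥ lam (k + 1) - lam k)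
        = x (k + 1) ⬝ᵥ Aᵀ *ᵥ lam (k + 1) - x k ⬝ᵥ Aᵀ *ᵥ lam k := by
    intro k hk
    have hpair : x (k + 1) ⬝ᵥ lam k = lam k ⬝ᵥ A *ᵥ x k + lam k ⬝ᵥ B *ᵥ w k := by
      rw [hx k (mem_range.mp hk), dotProduct_comm, dotProduct_add]
    rw [dotProduct_sub, hpair, dotProduct_transpose_mulVec B, dotProduct_transpose_mulVec A (x k)]
    ring
  rw [sum_congr rfl step, sum_range_sub (fun k ↦ x k ⬝ᵥ Aᵀ *ᵥ lam k)]
  ring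

/-- Twice the smoother cost `J` of the paper. -/
def smootherCost [Ring α] (P : Matrix ι ι α) (Q : Matrix κ κ α) (R : Matrix ν ν α)
    (xbar : ι → α) (N : ℕ) (x : ℕ → ι → α) (w : ℕ → κ → α) (v : ℕ → ν → α) : α :=
  (x 0 - xbar) ⬝ᵥ P *ᵥ (x 0 - xbar) + ∑ k ∈ range N, w k ⬝ᵥ Q *ᵥ w k
    + ∑ k ∈ Icc 1 N, v k ⬝ᵥ R *ᵥ v k

def smootherCross [Ring α] (P : Matrix ι ι α) (Q : Matrix κ κ α) (R : Matrix ν ν α)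
    (xbar : ι → α) (N : ℕ) (x dx : ℕ → ι → α) (w dw : ℕ → κ → α) (v dv : ℕ → ν → α) : α :=
  dx 0 ⬝ᵥ P *ᵥ (x 0 - xbar) + ∑ k ∈ range N, dw k ⬝ᵥ Q *ᵥ w k
    + ∑ k ∈ Icc 1 N, dv k ⬝ᵥ R *ᵥ v k

section CommRing

variable [CommRing α] {P : Matrix ι ι α} {Q : Matrix κ κ α} {R : Matrix ν ν α}

theorem smootherCost_add (hP : P.IsSymm) (hQ : Q.IsSymm) (hR : R.IsSymm) (xbar : ι → α)
    (N : ℕ) (x dx : ℕ → ι → α) (w dw : ℕ → κ → α) (v dv : ℕ → ν → α) :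
    smootherCost P Q R xbar N (x + dx) (w + dw) (v + dv)
      = smootherCost P Q R xbar N x w v + 2 * smootherCross P Q R xbar N x dx w dw v dv
        + smootherCost P Q R 0 N dx dw dv := by
  have hx0 : x 0 + dx 0 - xbar = (x 0 - xbar) + dx 0 := by abel
  simp only [smootherCost, smootherCross, Pi.add_apply, sub_zero, hx0,
    hP.add_dotProduct_mulVec_add, hQ.add_dotProduct_mulVec_add, hR.add_dotProduct_mulVec_add,
    sum_add_distrib, ← mul_sum]
  ring

theorem smootherCross_eq_zero {A : Matrix ι ι α} {B : Matrix ι κ α} {C : Matrix ν ι α}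
    {N : ℕ} {xbar : ι → α} {x dx : ℕ → ι → α} {w dw : ℕ → κ → α} {v dv : ℕ → ν → α}
    {lam : ℕ → ι → α} (hlamN : lam N = 0) (hPx : P *ᵥ (x 0 - xbar) = Aᵀ *ᵥ lam 0)
    (hQw : ∀ k < N, Q *ᵥ w k = Bᵀ *ᵥ lam k)
    (hRv : ∀ k < N, Cᵀ *ᵥ (R *ᵥ v (k + 1)) = lam k - Aᵀ *ᵥ lam (k + 1))
    (hdx : ∀ k < N, dx (k + 1) = A *ᵥ dx k + B *ᵥ dw k)
    (hdv : ∀ k < N, dv (k + 1) = -(C *ᵥ dx (k + 1))) :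
    smootherCross P Q R xbar N x dx w dw v dv = 0 := by
  have hw : ∑ k ∈ range N, dw k ⬝ᵥ Q *ᵥ w k = ∑ k ∈ range N, dw k ⬝ᵥ Bᵀ *ᵥ lam k :=
    sum_congr rfl fun k hk ↦ by rw [hQw k (mem_range.mp hk)]
  have hv : ∑ k ∈ Icc 1 N, dv k ⬝ᵥ R *ᵥ v k
      = ∑ k ∈ range N, dx (k + 1) ⬝ᵥ (Aᵀ *ᵥ lam (k + 1) - lam k) := by
    rw [← Ico_add_one_right_eq_Icc, ← zero_add 1, ← sum_Ico_add', ← range_eq_Ico]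
    refine sum_congr rfl fun k hk ↦ ?_
    rw [hdv k (mem_range.mp hk), neg_dotProduct, dotProduct_comm, ← dotProduct_transpose_mulVec,
      hRv k (mem_range.mp hk), ← dotProduct_neg, neg_sub]
  rw [smootherCross, hPx, hw, hv, add_assoc, ← sum_add_distrib,
    sum_range_dotProduct_adjoint_eq hdx, hlamN, mulVec_zero, dotProduct_zero]

end CommRing

section Real

variable {P : Matrix ι ι ℝ} {Q : Matrix κ κ ℝ} {R : Matrix ν ν ℝ}

theorem smootherCost_nonneg (hP : P.PosSemidef) (hQ : Q.PosSemidef) (hR : R.PosSemidef)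
    (xbar : ι → ℝ) (N : ℕ) (x : ℕ → ι → ℝ) (w : ℕ → κ → ℝ) (v : ℕ → ν → ℝ) :
    0 ≤ smootherCost P Q R xbar N x w v :=
  add_nonneg (add_nonneg (hP.dotProduct_mulVec_self_nonneg _)
    (sum_nonneg fun _ _ ↦ hQ.dotProduct_mulVec_self_nonneg _))
    (sum_nonneg fun _ _ ↦ hR.dotProduct_mulVec_self_nonneg _)

theorem eq_of_smootherCost_eq_zero (hP : P.PosDef) (hQ : Q.PosDef) (hR : R.PosSemidef)
    {xbar : ι → ℝ} {N : ℕ} {x : ℕ → ι → ℝ} {w : ℕ → κ → ℝ} {v : ℕ → ν → ℝ}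
    (h : smootherCost P Q R xbar N x w v = 0) : x 0 = xbar ∧ ∀ k < N, w k = 0 := by
  have hx := hP.posSemidef.dotProduct_mulVec_self_nonneg (x 0 - xbar)
  have hw := sum_nonneg fun k (_ : k ∈ range N) ↦ hQ.posSemidef.dotProduct_mulVec_self_nonneg (w k)
  have hv := sum_nonneg fun k (_ : k ∈ Icc 1 N) ↦ hR.dotProduct_mulVec_self_nonneg (v k)
  unfold smootherCost at h
  refine ⟨sub_eq_zero.mp (hP.eq_zero_of_dotProduct_mulVec_self_eq_zero (by linarith)),
    fun k hk ↦ hQ.eq_zero_of_dotProduct_mulVec_self_eq_zero ?_⟩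
  exact (sum_eq_zero_iff_of_nonneg fun i _ ↦ hQ.posSemidef.dotProduct_mulVec_self_nonneg (w i)).mp
    (by linarith) k (mem_range.mpr hk)

variable {xbar : ι → ℝ} {N : ℕ} {x dx : ℕ → ι → ℝ} {w dw : ℕ → κ → ℝ} {v dv : ℕ → ν → ℝ}

theorem smootherCost_le_smootherCost_add (hP : P.PosSemidef) (hQ : Q.PosSemidef)
    (hR : R.PosSemidef) (hcross : smootherCross P Q R xbar N x dx w dw v dv = 0) :
    smootherCost P Q R xbar N x w v ≤ smootherCost P Q R xbar N (x + dx) (w + dw) (v + dv) := by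
  rw [smootherCost_add hP.isSymm hQ.isSymm hR.isSymm, hcross, mul_zero, add_zero]
  exact le_add_of_nonneg_right (smootherCost_nonneg hP hQ hR 0 N dx dw dv)

theorem eq_zero_of_smootherCost_add_eq (hP : P.PosDef) (hQ : Q.PosDef) (hR : R.PosSemidef)
    (hcross : smootherCross P Q R xbar N x dx w dw v dv = 0)
    (h : smootherCost P Q R xbar N (x + dx) (w + dw) (v + dv) = smootherCost P Q R xbar N x w v) :
    dx 0 = 0 ∧ ∀ k < N, dw k = 0 := by
  rw [smootherCost_add hP.posSemidef.isSymm hQ.posSemidef.isSymm hR.isSymm, hcross, mul_zero,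
    add_zero, add_eq_left] at h
  exact eq_of_smootherCost_eq_zero hP hQ hR h

end Real

theorem smoother_L2_optimality_general
    (n l m N : ℕ)
    (A : Matrix (Fin n) (Fin n) ℝ) (B : Matrix (Fin n) (Fin l) ℝ)
    (C : Matrix (Fin m) (Fin n) ℝ)
    (P : Matrix (Fin n) (Fin n) ℝ) (Q : Matrix (Fin l) (Fin l) ℝ)
    (R : Matrix (Fin m) (Fin m) ℝ)
    (hP : P.PosDef) (hQ : Q.PosDef) (hR : R.PosDef)
    (xbar : Fin n → ℝ) (y : ℕ → Fin m → ℝ)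
    (xhat : ℕ → Fin n → ℝ) (what : ℕ → Fin l → ℝ)
    (vhat : ℕ → Fin m → ℝ) (lam : ℕ → Fin n → ℝ)
    (hlamN : lam N = 0)
    (hlam : ∀ k, 1 ≤ k → k ≤ N →
      lam (k - 1) = Aᵀ *ᵥ lam k - Cᵀ *ᵥ (R *ᵥ (C *ᵥ xhat k)) + Cᵀ *ᵥ (R *ᵥ y k))
    (hx0 : xhat 0 = xbar + P⁻¹ *ᵥ (Aᵀ *ᵥ lam 0))
    (hx : ∀ k < N, xhat (k + 1) = A *ᵥ xhat k + B *ᵥ (Q⁻¹ *ᵥ (Bᵀ *ᵥ lam k)))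
    (hw : ∀ k < N, what k = Q⁻¹ *ᵥ (Bᵀ *ᵥ lam k))
    (hv : ∀ k, 1 ≤ k → k ≤ N → vhat k = y k - C *ᵥ xhat k) :
    ∀ (xt : ℕ → Fin n → ℝ) (wt : ℕ → Fin l → ℝ) (vt : ℕ → Fin m → ℝ),
      (∀ k < N, xt (k + 1) = A *ᵥ xt k + B *ᵥ wt k) →
      (∀ k, 1 ≤ k → k ≤ N → y k = C *ᵥ xt k + vt k) →
      (1 / 2) * ((xhat 0 - xbar) ⬝ᵥ P *ᵥ (xhat 0 - xbar)
            + ∑ k ∈ Finset.range N, what k ⬝ᵥ Q *ᵥ what k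
            + ∑ k ∈ Finset.Icc 1 N, vhat k ⬝ᵥ R *ᵥ vhat k)
          ≤ (1 / 2) * ((xt 0 - xbar) ⬝ᵥ P *ᵥ (xt 0 - xbar)
            + ∑ k ∈ Finset.range N, wt k ⬝ᵥ Q *ᵥ wt k
            + ∑ k ∈ Finset.Icc 1 N, vt k ⬝ᵥ R *ᵥ vt k)
      ∧ ((1 / 2) * ((xt 0 - xbar) ⬝ᵥ P *ᵥ (xt 0 - xbar)
            + ∑ k ∈ Finset.range N, wt k ⬝ᵥ Q *ᵥ wt k
            + ∑ k ∈ Finset.Icc 1 N, vt k ⬝ᵥ R *ᵥ vt k)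
          = (1 / 2) * ((xhat 0 - xbar) ⬝ᵥ P *ᵥ (xhat 0 - xbar)
            + ∑ k ∈ Finset.range N, what k ⬝ᵥ Q *ᵥ what k
            + ∑ k ∈ Finset.Icc 1 N, vhat k ⬝ᵥ R *ᵥ vhat k)
          → xt 0 = xhat 0 ∧ ∀ k < N, wt k = what k) := by
  intro xt wt vt hxt hyt
  obtain ⟨dx, rfl⟩ : ∃ d, xt = xhat + d := ⟨xt - xhat, (add_sub_cancel xhat xt).symm⟩
  obtain ⟨dw, rfl⟩ : ∃ d, wt = what + d := ⟨wt - what, (add_sub_cancel what wt).symm⟩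
  obtain ⟨dv, rfl⟩ : ∃ d, vt = vhat + d := ⟨vt - vhat, (add_sub_cancel vhat vt).symm⟩
  have hPx : P *ᵥ (xhat 0 - xbar) = Aᵀ *ᵥ lam 0 := by
    rw [hx0, add_sub_cancel_left, mulVec_nonsing_inv_mulVec hP.isUnit]
  have hQw : ∀ k < N, Q *ᵥ what k = Bᵀ *ᵥ lam k := fun k hk ↦ by
    rw [hw k hk, mulVec_nonsing_inv_mulVec hQ.isUnit]
  have hRv : ∀ k < N, Cᵀ *ᵥ (R *ᵥ vhat (k + 1)) = lam k - Aᵀ *ᵥ lam (k + 1) := fun k hk ↦ by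
    have hcostate := hlam (k + 1) k.succ_pos hk
    rw [Nat.add_sub_cancel] at hcostate
    rw [hv (k + 1) k.succ_pos hk, mulVec_sub, mulVec_sub, hcostate]
    abel
  have hdx : ∀ k < N, dx (k + 1) = A *ᵥ dx k + B *ᵥ dw k := fun k hk ↦ by
    have hstep := hxt k hk
    simp only [Pi.add_apply, mulVec_add, hx k hk, ← hw k hk] at hstep
    linear_combination (norm := module) hstep
  have hdv : ∀ k < N, dv (k + 1) = -(C *ᵥ dx (k + 1)) := fun k hk ↦ by
    have hmeas := hyt (k + 1) k.succ_pos hk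
    simp only [Pi.add_apply, mulVec_add, hv (k + 1) k.succ_pos hk] at hmeas
    linear_combination (norm := module) -hmeas
  have hcross := smootherCross_eq_zero hlamN hPx hQw hRv hdx hdv
  refine ⟨mul_le_mul_of_nonneg_left (smootherCost_le_smootherCost_add hP.posSemidef
    hQ.posSemidef hR.posSemidef hcross) one_half_pos.le, fun h ↦ ?_⟩
  obtain ⟨hdx0, hdw⟩ :=
    eq_zero_of_smootherCost_add_eq hP hQ hR.posSemidef hcross (mul_left_cancel₀ one_half_pos.ne' h)
  exact ⟨by simp [hdx0], fun k hk ↦ by simp [hdw k hk]⟩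

/-- **L₂-optimality of the H₂/H∞ fixed-interval smoother (Lemma 1).**
If `(x̂, ŵ, λ)` satisfies the two-point boundary value problem of the optimal smoother and
`v̂_k = y_k − C x̂_k`, then every tuple `(x̃, w̃, ṽ)` consistent with the dynamics and the
measurements has cost at least that of `(x̂, ŵ, v̂)`, with equality only if `x̃_0 = x̂_0` and
`w̃_k = ŵ_k` for all `k`. -/
theorem smoother_L2_optimality
    (n l m N : ℕ) (hN : 1 ≤ N)
    (A : Matrix (Fin n) (Fin n) ℝ) (B : Matrix (Fin n) (Fin l) ℝ)
    (C : Matrix (Fin m) (Fin n) ℝ)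
    (P : Matrix (Fin n) (Fin n) ℝ) (Q : Matrix (Fin l) (Fin l) ℝ)
    (R : Matrix (Fin m) (Fin m) ℝ)
    (hP : P.PosDef) (hQ : Q.PosDef) (hR : R.PosDef)
    (xbar : Fin n → ℝ) (y : ℕ → Fin m → ℝ)
    (xhat : ℕ → Fin n → ℝ) (what : ℕ → Fin l → ℝ)
    (vhat : ℕ → Fin m → ℝ) (lam : ℕ → Fin n → ℝ)
    (hlamN : lam N = 0)
    (hlam : ∀ k, 1 ≤ k → k ≤ N →
      lam (k - 1) = Aᵀ *ᵥ lam k - Cᵀ *ᵥ (R *ᵥ (C *ᵥ xhat k)) + Cᵀ *ᵥ (R *ᵥ y k))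
    (hx0 : xhat 0 = xbar + P⁻¹ *ᵥ (Aᵀ *ᵥ lam 0))
    (hx : ∀ k < N, xhat (k + 1) = A *ᵥ xhat k + B *ᵥ (Q⁻¹ *ᵥ (Bᵀ *ᵥ lam k)))
    (hw : ∀ k < N, what k = Q⁻¹ *ᵥ (Bᵀ *ᵥ lam k))
    (hv : ∀ k, 1 ≤ k → k ≤ N → vhat k = y k - C *ᵥ xhat k) :
    ∀ (xt : ℕ → Fin n → ℝ) (wt : ℕ → Fin l → ℝ) (vt : ℕ → Fin m → ℝ),
      (∀ k < N, xt (k + 1) = A *ᵥ xt k + B *ᵥ wt k) →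
      (∀ k, 1 ≤ k → k ≤ N → y k = C *ᵥ xt k + vt k) →
      (1 / 2) * ((xhat 0 - xbar) ⬝ᵥ P *ᵥ (xhat 0 - xbar)
            + ∑ k ∈ Finset.range N, what k ⬝ᵥ Q *ᵥ what k
            + ∑ k ∈ Finset.Icc 1 N, vhat k ⬝ᵥ R *ᵥ vhat k)
          ≤ (1 / 2) * ((xt 0 - xbar) ⬝ᵥ P *ᵥ (xt 0 - xbar)
            + ∑ k ∈ Finset.range N, wt k ⬝ᵥ Q *ᵥ wt k
            + ∑ k ∈ Finset.Icc 1 N, vt k ⬝ᵥ R *ᵥ vt k)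
      ∧ ((1 / 2) * ((xt 0 - xbar) ⬝ᵥ P *ᵥ (xt 0 - xbar)
            + ∑ k ∈ Finset.range N, wt k ⬝ᵥ Q *ᵥ wt k
            + ∑ k ∈ Finset.Icc 1 N, vt k ⬝ᵥ R *ᵥ vt k)
          = (1 / 2) * ((xhat 0 - xbar) ⬝ᵥ P *ᵥ (xhat 0 - xbar)
            + ∑ k ∈ Finset.range N, what k ⬝ᵥ Q *ᵥ what k
            + ∑ k ∈ Finset.Icc 1 N, vhat k ⬝ᵥ R *ᵥ vhat k)
          → xt 0 = xhat 0 ∧ ∀ k < N, wt k = what k) :=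
  smoother_L2_optimality_general n l m N A B C P Q R hP hQ hR xbar y xhat what vhat lam hlamN hlam
    hx0 hx hw hv
end

section
/- Let (Θ̂, ζ̂) ∈ ℝ^{Nm}×ℝ^{Nm} maximize D(Θ, ζ) = −½ΘᵀMΘ − ε̄ᵀζ + ΘᵀY over all (Θ, ζ) satisfying ζ ≥ Θ and ζ ≥ −Θ componentwise. Write Θ̂ = (θ̂_1,…,θ̂_N) with θ̂_k ∈ ℝ^m, and define λ_0,…,λ_N ∈ ℝ^n by λ_N = 0 and λ_{k−1} = Aᵀλ_k + Cᵀθ̂_k for k = 1,…,N; define x̂_0 = x̄_0 + P⁻¹Aᵀλ_0, x̂_{k+1} = A x̂_k + B Q⁻¹Bᵀλ_k, ŵ_k = Q⁻¹Bᵀλ_k for k = 0,…,N−1, and η_k = y_k − C x̂_k − R⁻¹θ̂_k for k = 1,…,N. Then |η_k| ≤ ε componentwise for every k, and (x̂_0, ŵ, η) minimizes the ε-insensitive cost J over all feasible tuples, i.e. J(x̂_0, ŵ, η) ≤ J(x̃_0, w̃, η̃) for every x̃_0 ∈ ℝ^n, w̃_0,…,w̃_{N−1} ∈ ℝ^l and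 η̃_1,…,η̃_N with |η̃_k| ≤ ε componentwise. -/
/-!
Stack the measurements, noises and residuals so that the cost becomes the batch least-squares cost
`½(δᵀPδ + WᵀQW + rᵀRr)` with `r = Y − Oδ − FW − η`, where `Q`, `R` are now block diagonal.
Completing the square in each of the three terms (Fenchel–Young) gives weak duality:
`Θᵀ(Y − η) − ½ΘᵀMΘ ≤ J` for every `Θ`. At a dual maximizer, perturbing one coordinate of `(Θ̂, ζ̂)`
gives `|Y − MΘ̂| ≤ ε̄`, and rescaling `(Θ̂, ζ̂)` gives `Θ̂ᵀY − ε̄ᵀζ̂ = Θ̂ᵀMΘ̂`; together with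
`|Θ̂| ≤ ζ̂` this bounds `J` on feasible tuples below by `½Θ̂ᵀMΘ̂`. The backward recursion for `λ`
computes `OᵀΘ̂ = Aᵀλ₀` and the blocks `Bᵀλ_k` of `FᵀΘ̂`, so the constructed tuple is the point where
all three Fenchel–Young inequalities are equalities: its residual is `Y − MΘ̂` and its cost is
`½Θ̂ᵀMΘ̂`.
-/

open Matrix

/-- State trajectory generated by `x_{k+1} = A x_k + B w_k` from initial state `x0`. -/
def traj {n l : ℕ} (A : Matrix (Fin n) (Fin n) ℝ) (B : Matrix (Fin n) (Fin l) ℝ)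
    (x0 : Fin n → ℝ) (w : ℕ → Fin l → ℝ) : ℕ → Fin n → ℝ
  | 0 => x0
  | k + 1 => A *ᵥ traj A B x0 w k + B *ᵥ w k

/-- The ε-insensitive cost
`J(x0, w, η) = ½[(x0 − x̄0)ᵀP(x0 − x̄0) + Σ w_kᵀQw_k + Σ (y_k − C x_k − η_k)ᵀR(y_k − C x_k − η_k)]`,
where `x_1, …, x_N` are generated from `x0, w` by the dynamics. -/
noncomputable def epsCost {n l m : ℕ} (N : ℕ)
    (A : Matrix (Fin n) (Fin n) ℝ) (B : Matrix (Fin n) (Fin l) ℝ)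
    (C : Matrix (Fin m) (Fin n) ℝ)
    (P : Matrix (Fin n) (Fin n) ℝ) (Q : Matrix (Fin l) (Fin l) ℝ)
    (R : Matrix (Fin m) (Fin m) ℝ)
    (xbar : Fin n → ℝ) (y : ℕ → Fin m → ℝ)
    (x0 : Fin n → ℝ) (w : ℕ → Fin l → ℝ) (η : Fin N → Fin m → ℝ) : ℝ :=
  (1 / 2) * ((x0 - xbar) ⬝ᵥ P *ᵥ (x0 - xbar)
    + ∑ k ∈ Finset.range N, w k ⬝ᵥ Q *ᵥ w k
    + ∑ k : Fin N,
        (y ((k : ℕ) + 1) - C *ᵥ traj A B x0 w ((k : ℕ) + 1) - η k) ⬝ᵥ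
          R *ᵥ (y ((k : ℕ) + 1) - C *ᵥ traj A B x0 w ((k : ℕ) + 1) - η k))

/-- The block lower-triangular matrix `F` whose `(k, i)` block is `C A^{k−1−i} B` (1-based row
block `k`, 0-based column block `i`, nonzero iff `i ≤ k − 1`). -/
def Fmat {n l m : ℕ} (N : ℕ) (A : Matrix (Fin n) (Fin n) ℝ) (B : Matrix (Fin n) (Fin l) ℝ)
    (C : Matrix (Fin m) (Fin n) ℝ) : Matrix (Fin N × Fin m) (Fin N × Fin l) ℝ :=
  fun p q => if (q.1 : ℕ) ≤ (p.1 : ℕ) then (C * A ^ ((p.1 : ℕ) - (q.1 : ℕ)) * B) p.2 q.2 else 0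

/-- Block-diagonal matrix with `N` diagonal blocks `Q⁻¹`. -/
noncomputable def Qinv {l : ℕ} (N : ℕ) (Q : Matrix (Fin l) (Fin l) ℝ) :
    Matrix (Fin N × Fin l) (Fin N × Fin l) ℝ :=
  fun p q => if p.1 = q.1 then Q⁻¹ p.2 q.2 else 0

/-- Block-diagonal matrix with `N` diagonal blocks `R⁻¹`. -/
noncomputable def Rinv {m : ℕ} (N : ℕ) (R : Matrix (Fin m) (Fin m) ℝ) :
    Matrix (Fin N × Fin m) (Fin N × Fin m) ℝ :=
  fun p q => if p.1 = q.1 then R⁻¹ p.2 q.2 else 0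

/-- The vertical stack `O` of `C A, C A², …, C A^N`. -/
def Omat {n m : ℕ} (N : ℕ) (A : Matrix (Fin n) (Fin n) ℝ) (C : Matrix (Fin m) (Fin n) ℝ) :
    Matrix (Fin N × Fin m) (Fin n) ℝ :=
  fun p c => (C * A ^ ((p.1 : ℕ) + 1)) p.2 c

/-- The stacked vector `Y` of `y_k − C A^k x̄0`, `k = 1, …, N`. -/
def Yvec {n m : ℕ} (N : ℕ) (A : Matrix (Fin n) (Fin n) ℝ) (C : Matrix (Fin m) (Fin n) ℝ)
    (xbar : Fin n → ℝ) (y : ℕ → Fin m → ℝ) : (Fin N × Fin m) → ℝ :=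
  fun p => y ((p.1 : ℕ) + 1) p.2 - ((C * A ^ ((p.1 : ℕ) + 1)) *ᵥ xbar) p.2

/-- `M = F Q_inv Fᵀ + R_inv + O P⁻¹ Oᵀ`. -/
noncomputable def Mmat {n l m : ℕ} (N : ℕ)
    (A : Matrix (Fin n) (Fin n) ℝ) (B : Matrix (Fin n) (Fin l) ℝ)
    (C : Matrix (Fin m) (Fin n) ℝ)
    (P : Matrix (Fin n) (Fin n) ℝ) (Q : Matrix (Fin l) (Fin l) ℝ)
    (R : Matrix (Fin m) (Fin m) ℝ) : Matrix (Fin N × Fin m) (Fin N × Fin m) ℝ :=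
  Fmat N A B C * Qinv N Q * (Fmat N A B C)ᵀ + Rinv N R + Omat N A C * P⁻¹ * (Omat N A C)ᵀ

open Filter Topology Function
open scoped Kronecker

theorem nonpos_of_forall_mul_le_sq {a c : ℝ} (h : ∀ t : ℝ, 0 < t → t < 1 → t * a ≤ t ^ 2 * c) :
    a ≤ 0 := by
  have hlim : Tendsto (fun t : ℝ => t * c) (𝓝[>] 0) (𝓝 0) :=
    ((continuous_mul_const c).tendsto' 0 0 (zero_mul c)).mono_left nhdsWithin_le_nhds
  refine ge_of_tendsto hlim ?_
  filter_upwards [Ioo_mem_nhdsGT (zero_lt_one' ℝ)] with t ⟨ht0, ht1⟩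
  exact le_of_mul_le_mul_left (by linarith [h t ht0 ht1]) ht0

theorem dotProduct_le_dotProduct_of_abs_le {ι : Type*} [Fintype ι] {u v a b : ι → ℝ}
    (hu : ∀ i, |u i| ≤ a i) (hv : ∀ i, |v i| ≤ b i) : u ⬝ᵥ v ≤ a ⬝ᵥ b :=
  Finset.sum_le_sum fun i _ => (le_abs_self _).trans <| (abs_mul (u i) (v i)).trans_le <|
    mul_le_mul (hu i) (hv i) (abs_nonneg _) ((abs_nonneg _).trans (hu i))

namespace Matrix

theorem PosDef.isSymm {γ : Type*} {P : Matrix γ γ ℝ} (hP : P.PosDef) : P.IsSymm :=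
  isHermitian_iff_isSymm.mp hP.isHermitian

variable {ι γ : Type*} [Fintype ι] [Fintype γ]

theorem IsSymm.dotProduct_mulVec_comm {M : Matrix ι ι ℝ} (hM : M.IsSymm) (u v : ι → ℝ) :
    u ⬝ᵥ M *ᵥ v = v ⬝ᵥ M *ᵥ u := by
  rw [← dotProduct_transpose_mulVec, hM.eq]

variable [DecidableEq γ] {P : Matrix γ γ ℝ}

theorem mulVec_nonsing_inv_mulVec_s1 (hP : IsUnit P) (a : γ → ℝ) : P *ᵥ (P⁻¹ *ᵥ a) = a := by
  rw [mulVec_mulVec, mul_nonsing_inv _ ((isUnit_iff_isUnit_det P).mp hP), one_mulVec]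

theorem nonsing_inv_mulVec_dotProduct_mulVec (hP : IsUnit P) (a : γ → ℝ) :
    (P⁻¹ *ᵥ a) ⬝ᵥ P *ᵥ (P⁻¹ *ᵥ a) = a ⬝ᵥ P⁻¹ *ᵥ a := by
  rw [mulVec_nonsing_inv_mulVec_s1 hP, dotProduct_comm]

theorem PosDef.dotProduct_le (hP : P.PosDef) (a x : γ → ℝ) :
    a ⬝ᵥ x ≤ (1 / 2) * (x ⬝ᵥ P *ᵥ x) + (1 / 2) * (a ⬝ᵥ P⁻¹ *ᵥ a) := by
  have hsq := hP.posSemidef.dotProduct_mulVec_nonneg (x - P⁻¹ *ᵥ a)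
  simp only [star_trivial, mulVec_sub, sub_dotProduct, dotProduct_sub,
    mulVec_nonsing_inv_mulVec_s1 hP.isUnit, hP.isSymm.dotProduct_mulVec_comm (P⁻¹ *ᵥ a) x,
    dotProduct_comm x a, dotProduct_comm (P⁻¹ *ᵥ a) a] at hsq
  linarith

end Matrix

section BatchLeastSquares

variable {ι κ γ : Type*} [Fintype ι] [Fintype κ] [Fintype γ]
  [DecidableEq ι] [DecidableEq κ] [DecidableEq γ]
  {P : Matrix γ γ ℝ} {Q : Matrix κ κ ℝ} {R : Matrix ι ι ℝ}

noncomputable def batchCost (P : Matrix γ γ ℝ) (Q : Matrix κ κ ℝ) (R : Matrix ι ι ℝ)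
    (δ : γ → ℝ) (W : κ → ℝ) (r : ι → ℝ) : ℝ :=
  (1 / 2) * (δ ⬝ᵥ P *ᵥ δ + W ⬝ᵥ Q *ᵥ W + r ⬝ᵥ R *ᵥ r)

noncomputable def dualMatrix (O : Matrix ι γ ℝ) (F : Matrix ι κ ℝ)
    (P : Matrix γ γ ℝ) (Q : Matrix κ κ ℝ) (R : Matrix ι ι ℝ) : Matrix ι ι ℝ :=
  F * Q⁻¹ * Fᵀ + R⁻¹ + O * P⁻¹ * Oᵀ

theorem dualMatrix_isSymm (O : Matrix ι γ ℝ) (F : Matrix ι κ ℝ)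
    (hP : P.IsSymm) (hQ : Q.IsSymm) (hR : R.IsSymm) : (dualMatrix O F P Q R).IsSymm := by
  simp only [IsSymm, dualMatrix, transpose_add, transpose_mul, transpose_transpose,
    transpose_nonsing_inv, hP.eq, hQ.eq, hR.eq, Matrix.mul_assoc]

theorem dualMatrix_mulVec (O : Matrix ι γ ℝ) (F : Matrix ι κ ℝ) (Θ : ι → ℝ) :
    dualMatrix O F P Q R *ᵥ Θ
      = F *ᵥ (Q⁻¹ *ᵥ (Fᵀ *ᵥ Θ)) + R⁻¹ *ᵥ Θ + O *ᵥ (P⁻¹ *ᵥ (Oᵀ *ᵥ Θ)) := by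
  simp only [dualMatrix, add_mulVec, ← mulVec_mulVec]

theorem dotProduct_dualMatrix_mulVec (O : Matrix ι γ ℝ) (F : Matrix ι κ ℝ) (Θ : ι → ℝ) :
    Θ ⬝ᵥ dualMatrix O F P Q R *ᵥ Θ
      = (Fᵀ *ᵥ Θ) ⬝ᵥ Q⁻¹ *ᵥ (Fᵀ *ᵥ Θ) + Θ ⬝ᵥ R⁻¹ *ᵥ Θ
        + (Oᵀ *ᵥ Θ) ⬝ᵥ P⁻¹ *ᵥ (Oᵀ *ᵥ Θ) := by
  simp only [dualMatrix_mulVec, dotProduct_add, dotProduct_mulVec Θ F, dotProduct_mulVec Θ O,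
    ← mulVec_transpose]

theorem dual_le_batchCost (hP : P.PosDef) (hQ : Q.PosDef) (hR : R.PosDef)
    (O : Matrix ι γ ℝ) (F : Matrix ι κ ℝ) (Y e Θ : ι → ℝ) (δ : γ → ℝ) (W : κ → ℝ) :
    Θ ⬝ᵥ (Y - e) - (1 / 2) * (Θ ⬝ᵥ dualMatrix O F P Q R *ᵥ Θ)
      ≤ batchCost P Q R δ W (Y - O *ᵥ δ - F *ᵥ W - e) := by
  have hx := hP.dotProduct_le (Oᵀ *ᵥ Θ) δ
  have hw := hQ.dotProduct_le (Fᵀ *ᵥ Θ) W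
  have hr := hR.dotProduct_le Θ (Y - O *ᵥ δ - F *ᵥ W - e)
  rw [dotProduct_comm, dotProduct_transpose_mulVec] at hx hw
  rw [dotProduct_dualMatrix_mulVec, batchCost]
  simp only [dotProduct_sub] at hr ⊢
  linarith

theorem batchCost_dual_point (hP : IsUnit P) (hQ : IsUnit Q) (hR : IsUnit R)
    (O : Matrix ι γ ℝ) (F : Matrix ι κ ℝ) (Θ : ι → ℝ) :
    batchCost P Q R (P⁻¹ *ᵥ (Oᵀ *ᵥ Θ)) (Q⁻¹ *ᵥ (Fᵀ *ᵥ Θ)) (R⁻¹ *ᵥ Θ)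
      = (1 / 2) * (Θ ⬝ᵥ dualMatrix O F P Q R *ᵥ Θ) := by
  rw [dotProduct_dualMatrix_mulVec, batchCost, nonsing_inv_mulVec_dotProduct_mulVec hP,
    nonsing_inv_mulVec_dotProduct_mulVec hQ, nonsing_inv_mulVec_dotProduct_mulVec hR]
  ring

end BatchLeastSquares

section DualQP

variable {ι : Type*} [Fintype ι] {M : Matrix ι ι ℝ} {Y ε : ι → ℝ}

noncomputable def dualObjective (M : Matrix ι ι ℝ) (Y ε : ι → ℝ) (Θ ζ : ι → ℝ) : ℝ :=
  -(1 / 2) * (Θ ⬝ᵥ M *ᵥ Θ) - ε ⬝ᵥ ζ + Θ ⬝ᵥ Y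

theorem dualObjective_smul (s : ℝ) (Θ ζ : ι → ℝ) :
    dualObjective M Y ε (s • Θ) (s • ζ)
      = -(1 / 2) * s ^ 2 * (Θ ⬝ᵥ M *ᵥ Θ) - s * (ε ⬝ᵥ ζ) + s * (Θ ⬝ᵥ Y) := by
  simp only [dualObjective, mulVec_smul, smul_dotProduct, dotProduct_smul, smul_eq_mul]
  ring

theorem dualObjective_add_single [DecidableEq ι] (hM : M.IsSymm) (Θ ζ : ι → ℝ) (p : ι) (t : ℝ) :
    dualObjective M Y ε (Θ + Pi.single p t) (ζ + Pi.single p |t|)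
      = dualObjective M Y ε Θ ζ + t * (Y - M *ᵥ Θ) p - |t| * ε p - (1 / 2) * t ^ 2 * M p p := by
  simp only [dualObjective, mulVec_add, add_dotProduct, dotProduct_add]
  rw [hM.dotProduct_mulVec_comm Θ (Pi.single p t)]
  simp only [single_dotProduct, dotProduct_single, mulVec_single, Pi.smul_apply, col_apply,
    op_smul_eq_mul, Pi.sub_apply]
  ring

end DualQP

section DualQPOptimality

variable {ι : Type*} [Fintype ι] {M : Matrix ι ι ℝ} {Y ε Θ₀ ζ₀ : ι → ℝ}

theorem abs_sub_mulVec_le_of_dual_max [DecidableEq ι] (hM : M.IsSymm)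
    (hfeas₁ : ∀ q, Θ₀ q ≤ ζ₀ q) (hfeas₂ : ∀ q, -Θ₀ q ≤ ζ₀ q)
    (hmax : ∀ Θ ζ : ι → ℝ, (∀ q, Θ q ≤ ζ q) → (∀ q, -Θ q ≤ ζ q) →
      dualObjective M Y ε Θ ζ ≤ dualObjective M Y ε Θ₀ ζ₀) (p : ι) :
    |(Y - M *ᵥ Θ₀) p| ≤ ε p := by
  have key (t : ℝ) : t * (Y - M *ᵥ Θ₀) p - |t| * ε p - (1 / 2) * t ^ 2 * M p p ≤ 0 := by
    have h := hmax (Θ₀ + Pi.single p t) (ζ₀ + Pi.single p |t|)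
      (fun q => by
        simp only [Pi.add_apply, Pi.single_apply]
        split_ifs <;> linarith [hfeas₁ q, le_abs_self t])
      (fun q => by
        simp only [Pi.add_apply, Pi.single_apply]
        split_ifs <;> linarith [hfeas₂ q, neg_le_abs t])
    rw [dualObjective_add_single hM] at h
    linarith
  rw [abs_le']
  constructor
  · refine sub_nonpos.mp (nonpos_of_forall_mul_le_sq (c := M p p / 2) fun t ht _ => ?_)
    have h := key t
    rw [abs_of_pos ht] at h
    linear_combination h
  · refine sub_nonpos.mp (nonpos_of_forall_mul_le_sq (c := M p p / 2) fun t ht _ => ?_)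
    have h := key (-t)
    rw [abs_neg, abs_of_pos ht] at h
    linear_combination h

theorem dotProduct_sub_eq_of_dual_max
    (hfeas₁ : ∀ q, Θ₀ q ≤ ζ₀ q) (hfeas₂ : ∀ q, -Θ₀ q ≤ ζ₀ q)
    (hmax : ∀ Θ ζ : ι → ℝ, (∀ q, Θ q ≤ ζ q) → (∀ q, -Θ q ≤ ζ q) →
      dualObjective M Y ε Θ ζ ≤ dualObjective M Y ε Θ₀ ζ₀) :
    Θ₀ ⬝ᵥ Y - ε ⬝ᵥ ζ₀ = Θ₀ ⬝ᵥ M *ᵥ Θ₀ := by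
  have key (t : ℝ) (ht : -1 < t) :
      t * (Θ₀ ⬝ᵥ Y - ε ⬝ᵥ ζ₀ - Θ₀ ⬝ᵥ M *ᵥ Θ₀) - (1 / 2) * t ^ 2 * (Θ₀ ⬝ᵥ M *ᵥ Θ₀) ≤ 0 := by
    have hs : 0 ≤ 1 + t := by linarith
    have h := hmax ((1 + t) • Θ₀) ((1 + t) • ζ₀)
      (fun q => by simpa using mul_le_mul_of_nonneg_left (hfeas₁ q) hs)
      (fun q => by simpa using mul_le_mul_of_nonneg_left (hfeas₂ q) hs)
    rw [dualObjective_smul] at h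
    unfold dualObjective at h
    linear_combination h
  set c := Θ₀ ⬝ᵥ Y - ε ⬝ᵥ ζ₀ - Θ₀ ⬝ᵥ M *ᵥ Θ₀
  have hle := nonpos_of_forall_mul_le_sq (a := c) (c := (Θ₀ ⬝ᵥ M *ᵥ Θ₀) / 2)
    fun t ht _ => by linear_combination key t (by linarith)
  have hge := nonpos_of_forall_mul_le_sq (a := -c) (c := (Θ₀ ⬝ᵥ M *ᵥ Θ₀) / 2)
    fun t _ ht1 => by linear_combination key (-t) (by linarith)
  linarith

end DualQPOptimality

section Kronecker

variable {α κ ι : Type*} [CommSemiring α] [Fintype κ] [Fintype ι]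

theorem dotProduct_eq_sum_curry (u v : κ × ι → α) : u ⬝ᵥ v = ∑ k, curry u k ⬝ᵥ curry v k := by
  simp only [dotProduct, Fintype.sum_prod_type, curry_apply]

variable [DecidableEq κ]

theorem one_kronecker_mulVec (Q : Matrix ι ι α) (v : κ × ι → α) :
    ((1 : Matrix κ κ α) ⊗ₖ Q) *ᵥ v = uncurry fun k => Q *ᵥ curry v k := by
  funext ⟨k, i⟩
  simp [mulVec, dotProduct, Fintype.sum_prod_type, one_apply, ite_mul, Finset.sum_ite_eq]

theorem dotProduct_one_kronecker_mulVec (Q : Matrix ι ι α) (u v : κ × ι → α) :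
    u ⬝ᵥ ((1 : Matrix κ κ α) ⊗ₖ Q) *ᵥ v = ∑ k, curry u k ⬝ᵥ Q *ᵥ curry v k := by
  rw [one_kronecker_mulVec, dotProduct_eq_sum_curry]
  simp only [curry_uncurry]

end Kronecker

theorem Fin.sum_ite_le_eq_sum_range {M : Type*} [AddCommMonoid M] {N k : ℕ} (hk : k < N)
    (f : ℕ → M) :
    ∑ j : Fin N, (if (j : ℕ) ≤ k then f j else 0) = ∑ j ∈ Finset.range (k + 1), f j := by
  rw [Fin.sum_univ_eq_sum_range (fun j => if j ≤ k then f j else 0), ← Finset.sum_filter]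
  congr 1
  ext j
  simp only [Finset.mem_filter, Finset.mem_range]
  omega

section Smoothing

variable {n l m N : ℕ} (A : Matrix (Fin n) (Fin n) ℝ) (B : Matrix (Fin n) (Fin l) ℝ)
  (C : Matrix (Fin m) (Fin n) ℝ)

theorem traj_eq (x0 : Fin n → ℝ) (w : ℕ → Fin l → ℝ) (k : ℕ) :
    traj A B x0 w k = A ^ k *ᵥ x0 + ∑ i ∈ Finset.range k, (A ^ (k - 1 - i) * B) *ᵥ w i := by
  induction k with
  | zero => simp [traj]
  | succ k ih =>
    have hshift : ∑ i ∈ Finset.range k, A *ᵥ ((A ^ (k - 1 - i) * B) *ᵥ w i)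
        = ∑ i ∈ Finset.range k, (A ^ (k + 1 - 1 - i) * B) *ᵥ w i :=
      Finset.sum_congr rfl fun i hi => by
        have := Finset.mem_range.mp hi
        rw [mulVec_mulVec, ← Matrix.mul_assoc, ← pow_succ',
          show k - 1 - i + 1 = k + 1 - 1 - i by omega]
    rw [traj, ih, mulVec_add, mulVec_sum, hshift, Finset.sum_range_succ, mulVec_mulVec, ← pow_succ',
      show k + 1 - 1 - k = 0 by omega, pow_zero, Matrix.one_mul, add_assoc]

theorem traj_eq_of_forall_lt {x : ℕ → Fin n → ℝ} {w : ℕ → Fin l → ℝ}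
    (hx : ∀ k < N, x (k + 1) = A *ᵥ x k + B *ᵥ w k) {k : ℕ} (hk : k ≤ N) :
    traj A B (x 0) w k = x k := by
  induction k with
  | zero => rfl
  | succ k ih => rw [traj, ih (by omega), hx k (by omega)]

theorem Fmat_mulVec_apply (W : Fin N × Fin l → ℝ) (k : Fin N) (i : Fin m) :
    (Fmat N A B C *ᵥ W) (k, i)
      = ∑ j : Fin N, if (j : ℕ) ≤ k then ((C * A ^ ((k : ℕ) - j) * B) *ᵥ curry W j) i else 0 := by
  simp only [mulVec, dotProduct, Fintype.sum_prod_type, Fmat, ite_mul, zero_mul]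
  exact Finset.sum_congr rfl fun j _ => by split_ifs; exacts [rfl, Finset.sum_const_zero]

theorem Omat_mulVec_add_Fmat_mulVec (x0 : Fin n → ℝ) (w : ℕ → Fin l → ℝ) :
    Omat N A C *ᵥ x0 + Fmat N A B C *ᵥ uncurry (fun k : Fin N => w k)
      = uncurry fun k : Fin N => C *ᵥ traj A B x0 w (k + 1) := by
  funext ⟨k, i⟩
  rw [Pi.add_apply, Fmat_mulVec_apply, curry_uncurry, Fin.sum_ite_le_eq_sum_range k.2
    (fun j => ((C * A ^ ((k : ℕ) - j) * B) *ᵥ w j) i), uncurry_apply_pair, traj_eq, mulVec_add,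
    mulVec_sum, mulVec_mulVec]
  simp only [Pi.add_apply, Finset.sum_apply, mulVec_mulVec, Matrix.mul_assoc, Nat.add_sub_cancel]
  rfl

theorem Yvec_sub_Omat_mulVec_sub_Fmat_mulVec (xbar x0 : Fin n → ℝ) (y : ℕ → Fin m → ℝ)
    (w : ℕ → Fin l → ℝ) :
    Yvec N A C xbar y - Omat N A C *ᵥ (x0 - xbar) - Fmat N A B C *ᵥ uncurry (fun k : Fin N => w k)
      = uncurry fun k : Fin N => y (k + 1) - C *ᵥ traj A B x0 w (k + 1) := by
  have hY : Yvec N A C xbar y = uncurry (fun k : Fin N => y (k + 1)) - Omat N A C *ᵥ xbar := rfl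
  funext ⟨k, i⟩
  have h := congrFun (Omat_mulVec_add_Fmat_mulVec A B C x0 w) (k, i)
  simp only [hY, mulVec_sub, Pi.sub_apply, Pi.add_apply, uncurry_apply_pair] at h ⊢
  linarith

theorem Qinv_eq (Q : Matrix (Fin l) (Fin l) ℝ) :
    Qinv N Q = ((1 : Matrix (Fin N) (Fin N) ℝ) ⊗ₖ Q)⁻¹ := by
  rw [inv_kronecker, inv_one]
  ext ⟨i, a⟩ ⟨j, b⟩
  simp [Qinv, one_apply]

theorem Rinv_eq (R : Matrix (Fin m) (Fin m) ℝ) :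
    Rinv N R = ((1 : Matrix (Fin N) (Fin N) ℝ) ⊗ₖ R)⁻¹ := by
  rw [inv_kronecker, inv_one]
  ext ⟨i, a⟩ ⟨j, b⟩
  simp [Rinv, one_apply]

theorem Mmat_eq (P : Matrix (Fin n) (Fin n) ℝ) (Q : Matrix (Fin l) (Fin l) ℝ)
    (R : Matrix (Fin m) (Fin m) ℝ) :
    Mmat N A B C P Q R = dualMatrix (Omat N A C) (Fmat N A B C) P (1 ⊗ₖ Q) (1 ⊗ₖ R) := by
  rw [Mmat, dualMatrix, Qinv_eq, Rinv_eq]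

theorem epsCost_eq_batchCost (P : Matrix (Fin n) (Fin n) ℝ) (Q : Matrix (Fin l) (Fin l) ℝ)
    (R : Matrix (Fin m) (Fin m) ℝ) (xbar : Fin n → ℝ) (y : ℕ → Fin m → ℝ) (x0 : Fin n → ℝ)
    (w : ℕ → Fin l → ℝ) (η : Fin N → Fin m → ℝ) :
    epsCost N A B C P Q R xbar y x0 w η
      = batchCost P (1 ⊗ₖ Q) (1 ⊗ₖ R) (x0 - xbar) (uncurry fun k : Fin N => w k)
          (Yvec N A C xbar y - Omat N A C *ᵥ (x0 - xbar)
            - Fmat N A B C *ᵥ uncurry (fun k : Fin N => w k) - uncurry η) := by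
  rw [epsCost, ← Fin.sum_univ_eq_sum_range (fun k => w k ⬝ᵥ Q *ᵥ w k),
    Yvec_sub_Omat_mulVec_sub_Fmat_mulVec, batchCost, dotProduct_one_kronecker_mulVec,
    dotProduct_one_kronecker_mulVec]
  rfl

end Smoothing

section Adjoint

variable {n l m N : ℕ} {A : Matrix (Fin n) (Fin n) ℝ} {C : Matrix (Fin m) (Fin n) ℝ}
  {Θ : Fin N × Fin m → ℝ} {lam : ℕ → Fin n → ℝ}

theorem adjoint_eq_sum (hlamN : lam N = 0)
    (hlam : ∀ k : Fin N, lam k = Aᵀ *ᵥ lam (k + 1) + Cᵀ *ᵥ curry Θ k) {j : ℕ} (hj : j ≤ N) :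
    lam j = ∑ k : Fin N, if j ≤ (k : ℕ) then (C * A ^ ((k : ℕ) - j))ᵀ *ᵥ curry Θ k else 0 := by
  induction hj using Nat.decreasingInduction with
  | self => rw [hlamN]; exact (Finset.sum_eq_zero fun k _ => if_neg (by omega)).symm
  | of_succ j hj ih =>
    have hterm (k : Fin N) :
        (if j ≤ (k : ℕ) then (C * A ^ ((k : ℕ) - j))ᵀ *ᵥ curry Θ k else 0)
          = Aᵀ *ᵥ (if j + 1 ≤ (k : ℕ) then (C * A ^ ((k : ℕ) - (j + 1)))ᵀ *ᵥ curry Θ k else 0)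
            + if (⟨j, hj⟩ : Fin N) = k then Cᵀ *ᵥ curry Θ k else 0 := by
      rcases lt_trichotomy (k : ℕ) j with h | h | h
      · rw [if_neg (by omega), if_neg (by omega), if_neg (fun e => by subst e; simp at h),
          mulVec_zero, add_zero]
      · obtain rfl : k = ⟨j, hj⟩ := Fin.ext h
        simp
      · rw [if_pos h.le, if_pos (show j + 1 ≤ k from h), if_neg (fun e => by subst e; simp at h),
          add_zero, mulVec_mulVec, ← transpose_mul, Matrix.mul_assoc, ← pow_succ,
          show (k : ℕ) - (j + 1) + 1 = k - j by omega]
    rw [hlam ⟨j, hj⟩, ih, Finset.sum_congr rfl fun k _ => hterm k, Finset.sum_add_distrib,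
      Finset.sum_ite_eq, mulVec_sum]
    simp

theorem Omat_transpose_mulVec_eq_adjoint (hlamN : lam N = 0)
    (hlam : ∀ k : Fin N, lam k = Aᵀ *ᵥ lam (k + 1) + Cᵀ *ᵥ curry Θ k) :
    (Omat N A C)ᵀ *ᵥ Θ = Aᵀ *ᵥ lam 0 := by
  have hterm (k : Fin N) :
      Aᵀ *ᵥ (if 0 ≤ (k : ℕ) then (C * A ^ ((k : ℕ) - 0))ᵀ *ᵥ curry Θ k else 0)
        = (C * A ^ ((k : ℕ) + 1))ᵀ *ᵥ curry Θ k := by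
    rw [if_pos (Nat.zero_le _), Nat.sub_zero, mulVec_mulVec, ← transpose_mul, Matrix.mul_assoc,
      ← pow_succ]
  rw [adjoint_eq_sum hlamN hlam (Nat.zero_le N), mulVec_sum,
    Finset.sum_congr rfl fun k _ => hterm k]
  funext c
  simp only [mulVec, dotProduct, Fintype.sum_prod_type, Finset.sum_apply, Omat, transpose_apply,
    curry_apply]

theorem Fmat_transpose_mulVec_eq_adjoint (B : Matrix (Fin n) (Fin l) ℝ) (hlamN : lam N = 0)
    (hlam : ∀ k : Fin N, lam k = Aᵀ *ᵥ lam (k + 1) + Cᵀ *ᵥ curry Θ k) (j : Fin N) :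
    curry ((Fmat N A B C)ᵀ *ᵥ Θ) j = Bᵀ *ᵥ lam j := by
  have hterm (k : Fin N) :
      Bᵀ *ᵥ (if (j : ℕ) ≤ k then (C * A ^ ((k : ℕ) - j))ᵀ *ᵥ curry Θ k else 0)
        = if (j : ℕ) ≤ k then (C * A ^ ((k : ℕ) - j) * B)ᵀ *ᵥ curry Θ k else 0 := by
    split_ifs
    · rw [mulVec_mulVec, ← transpose_mul]
    · exact mulVec_zero _
  rw [adjoint_eq_sum hlamN hlam j.2.le, mulVec_sum, Finset.sum_congr rfl fun k _ => hterm k]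
  funext s
  simp only [mulVec, dotProduct, Fintype.sum_prod_type, Finset.sum_apply, Fmat, transpose_apply,
    curry_apply]
  refine Finset.sum_congr rfl fun k _ => ?_
  split_ifs
  · rfl
  · simp

theorem stacked_eq_of_adjoint {B : Matrix (Fin n) (Fin l) ℝ} {P : Matrix (Fin n) (Fin n) ℝ}
    {Q : Matrix (Fin l) (Fin l) ℝ} {R : Matrix (Fin m) (Fin m) ℝ} {xbar : Fin n → ℝ}
    {y : ℕ → Fin m → ℝ} {xhat : ℕ → Fin n → ℝ} {what : ℕ → Fin l → ℝ} {η : Fin N → Fin m → ℝ}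
    (hlamN : lam N = 0)
    (hlam : ∀ k : Fin N, lam k = Aᵀ *ᵥ lam (k + 1) + Cᵀ *ᵥ curry Θ k)
    (hxhat0 : xhat 0 = xbar + P⁻¹ *ᵥ (Aᵀ *ᵥ lam 0))
    (hxhat : ∀ k < N, xhat (k + 1) = A *ᵥ xhat k + B *ᵥ (Q⁻¹ *ᵥ (Bᵀ *ᵥ lam k)))
    (hwhat : ∀ k < N, what k = Q⁻¹ *ᵥ (Bᵀ *ᵥ lam k))
    (hη : ∀ k : Fin N, η k = y (k + 1) - C *ᵥ xhat (k + 1) - R⁻¹ *ᵥ curry Θ k) :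
    xhat 0 - xbar = P⁻¹ *ᵥ ((Omat N A C)ᵀ *ᵥ Θ)
      ∧ uncurry (fun k : Fin N => what k) = (1 ⊗ₖ Q)⁻¹ *ᵥ ((Fmat N A B C)ᵀ *ᵥ Θ)
      ∧ Yvec N A C xbar y - Omat N A C *ᵥ (xhat 0 - xbar)
          - Fmat N A B C *ᵥ uncurry (fun k : Fin N => what k) - uncurry η
        = (1 ⊗ₖ R)⁻¹ *ᵥ Θ := by
  have htraj (k : Fin N) : traj A B (xhat 0) what (k + 1) = xhat (k + 1) :=
    traj_eq_of_forall_lt A B (fun j hj => by rw [hxhat j hj, hwhat j hj]) k.2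
  refine ⟨?_, ?_, ?_⟩
  · rw [hxhat0, Omat_transpose_mulVec_eq_adjoint hlamN hlam, add_sub_cancel_left]
  · rw [inv_kronecker, inv_one, one_kronecker_mulVec]
    funext ⟨k, s⟩
    rw [uncurry_apply_pair, uncurry_apply_pair, hwhat k k.2,
      Fmat_transpose_mulVec_eq_adjoint B hlamN hlam]
  · rw [Yvec_sub_Omat_mulVec_sub_Fmat_mulVec, inv_kronecker, inv_one, one_kronecker_mulVec]
    funext ⟨k, i⟩
    simp only [Pi.sub_apply, uncurry_apply_pair, hη k, htraj k, sub_sub_cancel]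

end Adjoint

theorem eps_insensitive_smoothing_optimal_general
    (n l m N : ℕ)
    (A : Matrix (Fin n) (Fin n) ℝ) (B : Matrix (Fin n) (Fin l) ℝ)
    (C : Matrix (Fin m) (Fin n) ℝ)
    (P : Matrix (Fin n) (Fin n) ℝ) (Q : Matrix (Fin l) (Fin l) ℝ)
    (R : Matrix (Fin m) (Fin m) ℝ)
    (hP : P.PosDef) (hQ : Q.PosDef) (hR : R.PosDef)
    (xbar : Fin n → ℝ) (y : ℕ → Fin m → ℝ)
    (ε : Fin m → ℝ)
    (Θhat ζhat : Fin N × Fin m → ℝ)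
    (hfeas₁ : ∀ q, Θhat q ≤ ζhat q) (hfeas₂ : ∀ q, -Θhat q ≤ ζhat q)
    (hmax : ∀ Θ ζ : Fin N × Fin m → ℝ, (∀ q, Θ q ≤ ζ q) → (∀ q, -Θ q ≤ ζ q) →
      -(1 / 2) * (Θ ⬝ᵥ Mmat N A B C P Q R *ᵥ Θ) - (fun q => ε q.2) ⬝ᵥ ζ
          + Θ ⬝ᵥ Yvec N A C xbar y
        ≤ -(1 / 2) * (Θhat ⬝ᵥ Mmat N A B C P Q R *ᵥ Θhat) - (fun q => ε q.2) ⬝ᵥ ζhat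
          + Θhat ⬝ᵥ Yvec N A C xbar y)
    (lam : ℕ → Fin n → ℝ)
    (hlamN : lam N = 0)
    (hlam : ∀ k : Fin N,
      lam (k : ℕ) = Aᵀ *ᵥ lam ((k : ℕ) + 1) + Cᵀ *ᵥ (fun r => Θhat (k, r)))
    (xhat : ℕ → Fin n → ℝ)
    (hxhat0 : xhat 0 = xbar + P⁻¹ *ᵥ (Aᵀ *ᵥ lam 0))
    (hxhat : ∀ k < N, xhat (k + 1) = A *ᵥ xhat k + B *ᵥ (Q⁻¹ *ᵥ (Bᵀ *ᵥ lam k)))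
    (what : ℕ → Fin l → ℝ)
    (hwhat : ∀ k < N, what k = Q⁻¹ *ᵥ (Bᵀ *ᵥ lam k))
    (η : Fin N → Fin m → ℝ)
    (hη : ∀ k : Fin N,
      η k = y ((k : ℕ) + 1) - C *ᵥ xhat ((k : ℕ) + 1) - R⁻¹ *ᵥ (fun r => Θhat (k, r))) :
    (∀ (k : Fin N) (i : Fin m), |η k i| ≤ ε i) ∧
      ∀ (xt0 : Fin n → ℝ) (wt : ℕ → Fin l → ℝ) (ηt : Fin N → Fin m → ℝ),
        (∀ (k : Fin N) (i : Fin m), |ηt k i| ≤ ε i) →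
        epsCost N A B C P Q R xbar y (xhat 0) what η
          ≤ epsCost N A B C P Q R xbar y xt0 wt ηt := by
  set Q' := (1 : Matrix (Fin N) (Fin N) ℝ) ⊗ₖ Q
  set R' := (1 : Matrix (Fin N) (Fin N) ℝ) ⊗ₖ R
  set M := dualMatrix (Omat N A C) (Fmat N A B C) P Q' R'
  have hQ' : Q'.PosDef := PosDef.one.kronecker hQ
  have hR' : R'.PosDef := PosDef.one.kronecker hR
  rw [Mmat_eq] at hmax
  obtain ⟨hδ, hW, hres⟩ := stacked_eq_of_adjoint hlamN hlam hxhat0 hxhat hwhat hη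
  have hηY : uncurry η = Yvec N A C xbar y - M *ᵥ Θhat := by
    rw [dualMatrix_mulVec, ← hδ, ← hW, ← hres]
    abel
  refine ⟨fun k i => ?_, fun xt0 wt ηt hηt => ?_⟩
  · have h := abs_sub_mulVec_le_of_dual_max
      (dualMatrix_isSymm _ _ hP.isSymm hQ'.isSymm hR'.isSymm) hfeas₁ hfeas₂ hmax (k, i)
    rwa [← hηY] at h
  · have hbound : Θhat ⬝ᵥ uncurry ηt ≤ (fun q => ε q.2) ⬝ᵥ ζhat := by
      rw [dotProduct_comm _ ζhat]
      exact dotProduct_le_dotProduct_of_abs_le (fun q => abs_le'.mpr ⟨hfeas₁ q, hfeas₂ q⟩)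
        fun q => hηt q.1 q.2
    calc epsCost N A B C P Q R xbar y (xhat 0) what η
        = (1 / 2) * (Θhat ⬝ᵥ M *ᵥ Θhat) := by
          rw [epsCost_eq_batchCost, hres, hδ, hW,
            batchCost_dual_point hP.isUnit hQ'.isUnit hR'.isUnit]
      _ = Θhat ⬝ᵥ Yvec N A C xbar y - (fun q => ε q.2) ⬝ᵥ ζhat
            - (1 / 2) * (Θhat ⬝ᵥ M *ᵥ Θhat) := by
          rw [dotProduct_sub_eq_of_dual_max hfeas₁ hfeas₂ hmax]
          ring
      _ ≤ Θhat ⬝ᵥ (Yvec N A C xbar y - uncurry ηt) - (1 / 2) * (Θhat ⬝ᵥ M *ᵥ Θhat) := by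
          rw [dotProduct_sub]
          linarith
      _ ≤ epsCost N A B C P Q R xbar y xt0 wt ηt := by
          rw [epsCost_eq_batchCost]
          exact dual_le_batchCost hP hQ' hR' _ _ _ _ _ _ _

/-- **Theorem 1: optimal smoothing with ε-insensitive loss via the dual quadratic program.**
If `(Θ̂, ζ̂)` maximizes the dual objective `−½ΘᵀMΘ − ε̄ᵀζ + ΘᵀY` subject to `ζ ≥ Θ`, `ζ ≥ −Θ`,
and `λ, x̂, ŵ, η` are constructed from `Θ̂` by the stated recursions, then `|η_k| ≤ ε`
componentwise and `(x̂_0, ŵ, η)` minimizes the ε-insensitive cost `J` over all feasible tuples. -/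
theorem eps_insensitive_smoothing_optimal
    (n l m N : ℕ) (hN : 1 ≤ N)
    (A : Matrix (Fin n) (Fin n) ℝ) (B : Matrix (Fin n) (Fin l) ℝ)
    (C : Matrix (Fin m) (Fin n) ℝ)
    (P : Matrix (Fin n) (Fin n) ℝ) (Q : Matrix (Fin l) (Fin l) ℝ)
    (R : Matrix (Fin m) (Fin m) ℝ)
    (hP : P.PosDef) (hQ : Q.PosDef) (hR : R.PosDef)
    (xbar : Fin n → ℝ) (y : ℕ → Fin m → ℝ)
    (ε : Fin m → ℝ) (hε : ∀ i, 0 < ε i)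
    (Θhat ζhat : Fin N × Fin m → ℝ)
    (hfeas₁ : ∀ q, Θhat q ≤ ζhat q) (hfeas₂ : ∀ q, -Θhat q ≤ ζhat q)
    (hmax : ∀ Θ ζ : Fin N × Fin m → ℝ, (∀ q, Θ q ≤ ζ q) → (∀ q, -Θ q ≤ ζ q) →
      -(1 / 2) * (Θ ⬝ᵥ Mmat N A B C P Q R *ᵥ Θ) - (fun q => ε q.2) ⬝ᵥ ζ
          + Θ ⬝ᵥ Yvec N A C xbar y
        ≤ -(1 / 2) * (Θhat ⬝ᵥ Mmat N A B C P Q R *ᵥ Θhat) - (fun q => ε q.2) ⬝ᵥ ζhat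
          + Θhat ⬝ᵥ Yvec N A C xbar y)
    (lam : ℕ → Fin n → ℝ)
    (hlamN : lam N = 0)
    (hlam : ∀ k : Fin N,
      lam (k : ℕ) = Aᵀ *ᵥ lam ((k : ℕ) + 1) + Cᵀ *ᵥ (fun r => Θhat (k, r)))
    (xhat : ℕ → Fin n → ℝ)
    (hxhat0 : xhat 0 = xbar + P⁻¹ *ᵥ (Aᵀ *ᵥ lam 0))
    (hxhat : ∀ k < N, xhat (k + 1) = A *ᵥ xhat k + B *ᵥ (Q⁻¹ *ᵥ (Bᵀ *ᵥ lam k)))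
    (what : ℕ → Fin l → ℝ)
    (hwhat : ∀ k < N, what k = Q⁻¹ *ᵥ (Bᵀ *ᵥ lam k))
    (η : Fin N → Fin m → ℝ)
    (hη : ∀ k : Fin N,
      η k = y ((k : ℕ) + 1) - C *ᵥ xhat ((k : ℕ) + 1) - R⁻¹ *ᵥ (fun r => Θhat (k, r))) :
    (∀ (k : Fin N) (i : Fin m), |η k i| ≤ ε i) ∧
      ∀ (xt0 : Fin n → ℝ) (wt : ℕ → Fin l → ℝ) (ηt : Fin N → Fin m → ℝ),
        (∀ (k : Fin N) (i : Fin m), |ηt k i| ≤ ε i) →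
        epsCost N A B C P Q R xbar y (xhat 0) what η
          ≤ epsCost N A B C P Q R xbar y xt0 wt ηt :=
  eps_insensitive_smoothing_optimal_general n l m N A B C P Q R hP hQ hR xbar y ε Θhat ζhat hfeas₁
    hfeas₂ hmax lam hlamN hlam xhat hxhat0 hxhat what hwhat η hη
end

section
/- Let Θ = (θ_1,…,θ_N) ∈ ℝ^{Nm} with θ_k ∈ ℝ^m, and let λ_0,…,λ_N ∈ ℝ^n be defined by λ_N = 0 and λ_{k−1} = Aᵀλ_k + Cᵀθ_k for k = 1,…,N. Then Σ_{k=0}^{N−1} λ_kᵀ B Q⁻¹ Bᵀ λ_k = Θᵀ F Q_inv Fᵀ Θ. -/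
/-!
Unrolling the backward recursion gives `λ_i = ∑_{k ≥ i} (Aᵀ)^(k-i) Cᵀ θ_k`, so `Bᵀ λ_i` is exactly
the `i`-th block of `u = Fᵀ Θ`. Both sides are therefore `∑_i u_iᵀ Q⁻¹ u_i`: the left one after
factoring `λ_iᵀ B Q⁻¹ Bᵀ λ_i = (Bᵀλ_i)ᵀ Q⁻¹ (Bᵀλ_i)`, the right one because `Q_inv = I_N ⊗ Q⁻¹`.
-/

open Matrix

open scoped Kronecker

section

variable {R ι κ : Type*} [Fintype ι] [Fintype κ]

theorem dotProduct_mul_mul_transpose_mulVec [CommSemiring R] (F : Matrix ι κ R)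
    (M : Matrix κ κ R) (x : ι → R) :
    x ⬝ᵥ (F * M * Fᵀ) *ᵥ x = (Fᵀ *ᵥ x) ⬝ᵥ M *ᵥ (Fᵀ *ᵥ x) := by
  rw [← mulVec_mulVec, ← mulVec_mulVec, dotProduct_mulVec, ← mulVec_transpose]

theorem dotProduct_one_kronecker_mulVec_s9 [CommSemiring R] [DecidableEq ι] (M : Matrix κ κ R)
    (u : ι × κ → R) :
    u ⬝ᵥ ((1 : Matrix ι ι R) ⊗ₖ M) *ᵥ u = ∑ i, (fun s => u (i, s)) ⬝ᵥ M *ᵥ fun s => u (i, s) := by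
  simp [dotProduct, mulVec, kroneckerMap_apply, one_apply, Fintype.sum_prod_type, ite_mul,
    Finset.sum_ite_eq]

theorem eq_sum_pow_mulVec_of_backward_recursion [Semiring R] [DecidableEq ι] {N : ℕ}
    (A : Matrix ι ι R) (w : Fin N → ι → R) (x : ℕ → ι → R) (hxN : x N = 0)
    (hx : ∀ k : Fin N, x k = A *ᵥ x (k + 1) + w k) {i : ℕ} (hi : i ≤ N) :
    x i = ∑ k : Fin N, if i ≤ k then A ^ ((k : ℕ) - i) *ᵥ w k else 0 := by
  induction hi using Nat.decreasingInduction with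
  | self => exact hxN.trans (Finset.sum_eq_zero fun k _ => if_neg k.is_lt.not_ge).symm
  | of_succ i hi ih =>
    have hsplit : ∀ k : Fin N, (if i ≤ k then A ^ ((k : ℕ) - i) *ᵥ w k else 0) =
        A *ᵥ (if i + 1 ≤ k then A ^ ((k : ℕ) - (i + 1)) *ᵥ w k else 0) +
          if k = ⟨i, hi⟩ then w k else 0 := by
      intro k
      rcases lt_trichotomy (k : ℕ) i with h | rfl | h
      · simp [h.not_ge, Fin.ext_iff, h.ne, (h.trans (Nat.lt_succ_self i)).not_ge]
      · simp
      · have : (k : ℕ) - i = (k - (i + 1)) + 1 := by omega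
        simp [Fin.ext_iff, h.ne', Nat.succ_le_of_lt h, h.le, this, pow_succ', mulVec_mulVec]
    rw [hx ⟨i, hi⟩, ih, Finset.sum_congr rfl fun k _ => hsplit k, Finset.sum_add_distrib,
      Finset.sum_ite_eq']
    simp [mulVec_sum]

end

theorem Qinv_eq_one_kronecker {l : ℕ} (N : ℕ) (Q : Matrix (Fin l) (Fin l) ℝ) :
    Qinv N Q = (1 : Matrix (Fin N) (Fin N) ℝ) ⊗ₖ Q⁻¹ := by
  ext p q
  simp [Qinv, kroneckerMap_apply, one_apply, ite_mul]

theorem transpose_Fmat_mulVec_block {n l m N : ℕ} (A : Matrix (Fin n) (Fin n) ℝ)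
    (B : Matrix (Fin n) (Fin l) ℝ) (C : Matrix (Fin m) (Fin n) ℝ) (Θ : Fin N × Fin m → ℝ)
    (i : Fin N) :
    (fun s => ((Fmat N A B C)ᵀ *ᵥ Θ) (i, s)) =
      ∑ k : Fin N, if (i : ℕ) ≤ k then (C * A ^ ((k : ℕ) - i) * B)ᵀ *ᵥ fun r => Θ (k, r) else 0 := by
  ext s
  simp only [Finset.sum_apply, mulVec, dotProduct, transpose_apply, Fmat, Fintype.sum_prod_type]
  refine Finset.sum_congr rfl fun k _ => ?_
  split_ifs
  · simp only [mulVec, dotProduct, transpose_apply]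
  · simp

theorem costate_quadratic_form_eq_general
    (n l m N : ℕ)
    (A : Matrix (Fin n) (Fin n) ℝ) (B : Matrix (Fin n) (Fin l) ℝ)
    (C : Matrix (Fin m) (Fin n) ℝ) (Q : Matrix (Fin l) (Fin l) ℝ)
    (Θ : Fin N × Fin m → ℝ)
    (lam : ℕ → Fin n → ℝ)
    (hlamN : lam N = 0)
    (hlam : ∀ k : Fin N,
      lam (k : ℕ) = Aᵀ *ᵥ lam ((k : ℕ) + 1) + Cᵀ *ᵥ (fun r => Θ (k, r))) :
    ∑ k ∈ Finset.range N, lam k ⬝ᵥ (B * Q⁻¹ * Bᵀ) *ᵥ lam k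
      = Θ ⬝ᵥ (Fmat N A B C * Qinv N Q * (Fmat N A B C)ᵀ) *ᵥ Θ := by
  have hblock (i : Fin N) : Bᵀ *ᵥ lam i = fun s => ((Fmat N A B C)ᵀ *ᵥ Θ) (i, s) := by
    rw [transpose_Fmat_mulVec_block,
      eq_sum_pow_mulVec_of_backward_recursion Aᵀ _ lam hlamN hlam i.is_lt.le, mulVec_sum]
    refine Finset.sum_congr rfl fun k _ => ?_
    split_ifs
    · simp only [mulVec_mulVec, transpose_mul, transpose_pow, Matrix.mul_assoc]
    · exact mulVec_zero _
  rw [dotProduct_mul_mul_transpose_mulVec, Qinv_eq_one_kronecker, dotProduct_one_kronecker_mulVec_s9,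
    Finset.sum_range]
  simp only [dotProduct_mul_mul_transpose_mulVec, hblock]

/-- **Identity (26): `Σ_{k=0}^{N−1} λ_kᵀ B Q⁻¹ Bᵀ λ_k = Θᵀ F Q_inv Fᵀ Θ`** for the costate
recursion `λ_N = 0`, `λ_{k−1} = Aᵀλ_k + Cᵀθ_k`. -/
theorem costate_quadratic_form_eq
    (n l m N : ℕ) (hN : 1 ≤ N)
    (A : Matrix (Fin n) (Fin n) ℝ) (B : Matrix (Fin n) (Fin l) ℝ)
    (C : Matrix (Fin m) (Fin n) ℝ) (Q : Matrix (Fin l) (Fin l) ℝ)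
    (hQ : IsUnit Q.det)
    (Θ : Fin N × Fin m → ℝ)
    (lam : ℕ → Fin n → ℝ)
    (hlamN : lam N = 0)
    (hlam : ∀ k : Fin N,
      lam (k : ℕ) = Aᵀ *ᵥ lam ((k : ℕ) + 1) + Cᵀ *ᵥ (fun r => Θ (k, r))) :
    ∑ k ∈ Finset.range N, lam k ⬝ᵥ (B * Q⁻¹ * Bᵀ) *ᵥ lam k
      = Θ ⬝ᵥ (Fmat N A B C * Qinv N Q * (Fmat N A B C)ᵀ) *ᵥ Θ :=
  costate_quadratic_form_eq_general n l m N A B C Q Θ lam hlamN hlam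
end

section
/- Let (Ω, 𝒜, μ) be a probability space, and let x_0 : Ω → ℝ^n, w_0,…,w_{N−1} : Ω → ℝ^l and v_1,…,v_N : Ω → ℝ^m be mutually independent square-integrable random vectors, each with zero mean, satisfying E[x_0 x_0ᵀ] = P⁻¹, E[w_k w_kᵀ] = Q⁻¹ for every k, and E[v_k v_kᵀ] = R⁻¹ for every k. Define y_k = C A^k x_0 + Σ_{i=0}^{k−1} C A^{k−1−i} B w_i + v_k for k = 1,…,N, and let y : Ω → ℝ^{Nm} be the vertical stack of y_1,…,y_N. Then E[y yᵀ] = M, i.e. the Nm×Nm matrix whose (k,j) block is E[y_k y_jᵀ] equals F Q_inv Fᵀ + R_inv + O P⁻¹ Oᵀ. -/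
/-!
The stacked measurement vector is a linear image `y = K ξ` of the stacked noise vector
`ξ = (x₀, w, v)`, with `K = [O | F | 1]`, and second moments transform as
`E[K ξ (K ξ)ᵀ] = K E[ξ ξᵀ] Kᵀ`. By independence and zero means all cross moments of distinct
components of `ξ` vanish, so `E[ξ ξᵀ] = diag(P⁻¹, Q_inv, R_inv)`, and multiplying out the
block product gives `M`.
-/

open Matrix MeasureTheory ProbabilityTheory

/-- The family `(x_0, w_0, …, w_{N−1}, v_1, …, v_N)` of random vectors, indexed by
`Unit ⊕ Fin N ⊕ Fin N`. -/
def fam {Ω : Type*} {n l m N : ℕ} (x0 : Ω → Fin n → ℝ) (w : Fin N → Ω → Fin l → ℝ)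
    (v : Fin N → Ω → Fin m → ℝ) :
    (i : Unit ⊕ Fin N ⊕ Fin N) →
      Ω → Sum.elim (fun _ : Unit => Fin n → ℝ)
        (Sum.elim (fun _ : Fin N => Fin l → ℝ) (fun _ : Fin N => Fin m → ℝ)) i
  | Sum.inl _ => x0
  | Sum.inr (Sum.inl k) => w k
  | Sum.inr (Sum.inr k) => v k

/-- The measurable-space structures on the codomains of the family `fam`. -/
def famMS (n l m N : ℕ) :
    (i : Unit ⊕ Fin N ⊕ Fin N) →
      MeasurableSpace (Sum.elim (fun _ : Unit => Fin n → ℝ)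
        (Sum.elim (fun _ : Fin N => Fin l → ℝ) (fun _ : Fin N => Fin m → ℝ)) i)
  | Sum.inl _ => (inferInstance : MeasurableSpace (Fin n → ℝ))
  | Sum.inr (Sum.inl _) => (inferInstance : MeasurableSpace (Fin l → ℝ))
  | Sum.inr (Sum.inr _) => (inferInstance : MeasurableSpace (Fin m → ℝ))

section SecondMoment

variable {Ω ι κ : Type*} [MeasurableSpace Ω] {μ : Measure Ω}

noncomputable def secondMoment (X : Ω → ι → ℝ) (μ : Measure Ω) : Matrix ι ι ℝ :=
  of fun i j => ∫ ω, X ω i * X ω j ∂μ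

lemma secondMoment_apply (X : Ω → ι → ℝ) (i j : ι) :
    secondMoment X μ i j = ∫ ω, X ω i * X ω j ∂μ := rfl

lemma secondMoment_mulVec [Fintype ι] {X : Ω → ι → ℝ} (hX : ∀ i, MemLp (fun ω => X ω i) 2 μ)
    (K : Matrix κ ι ℝ) :
    secondMoment (fun ω => K *ᵥ X ω) μ = K * secondMoment X μ * Kᵀ := by
  ext p q
  have hint : ∀ i j, Integrable (fun ω => K p i * K q j * (X ω i * X ω j)) μ := fun i j =>
    ((hX i).integrable_mul (hX j)).const_mul _
  calc ∫ ω, (K *ᵥ X ω) p * (K *ᵥ X ω) q ∂μ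
      = ∫ ω, ∑ i, ∑ j, K p i * K q j * (X ω i * X ω j) ∂μ := by
        simp only [mulVec, dotProduct, Finset.sum_mul_sum]
        exact integral_congr_ae (.of_forall fun ω => Finset.sum_congr rfl fun i _ =>
          Finset.sum_congr rfl fun j _ => by ring)
    _ = ∑ i, ∑ j, K p i * K q j * ∫ ω, X ω i * X ω j ∂μ := by
        rw [integral_finsetSum _ fun i _ => integrable_finsetSum _ fun j _ => hint i j]
        simp_rw [integral_finsetSum _ fun j _ => hint _ j, integral_const_mul]
    _ = (K * secondMoment X μ * Kᵀ) p q := by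
        simp only [mul_apply, transpose_apply, secondMoment_apply, Finset.sum_mul]
        rw [Finset.sum_comm]
        exact Finset.sum_congr rfl fun i _ => Finset.sum_congr rfl fun j _ => by ring

lemma integral_apply_mul_apply_eq_zero_of_indepFun {X : Ω → ι → ℝ} {Y : Ω → κ → ℝ}
    (hXY : IndepFun X Y μ) {i : ι} {j : κ} (hXi : AEStronglyMeasurable (fun ω => X ω i) μ)
    (hYj : AEStronglyMeasurable (fun ω => Y ω j) μ) (hXi0 : ∫ ω, X ω i ∂μ = 0) :
    ∫ ω, X ω i * Y ω j ∂μ = 0 := by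
  simpa [Function.comp_def, hXi0] using
    (hXY.comp (measurable_pi_apply i) (measurable_pi_apply j)).integral_fun_mul_eq_mul_integral
      hXi hYj

lemma integral_apply_mul_apply_eq_ite_of_pairwise_indepFun [DecidableEq κ] {Z : κ → Ω → ι → ℝ}
    (hZ : Pairwise fun k k' => IndepFun (Z k) (Z k') μ)
    (hmeas : ∀ k i, AEStronglyMeasurable (fun ω => Z k ω i) μ)
    (hmean : ∀ k i, ∫ ω, Z k ω i ∂μ = 0) {S : Matrix ι ι ℝ}
    (hS : ∀ k i j, ∫ ω, Z k ω i * Z k ω j ∂μ = S i j) (k k' : κ) (i j : ι) :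
    ∫ ω, Z k ω i * Z k' ω j ∂μ = if k = k' then S i j else 0 := by
  split_ifs with h
  · subst h; exact hS k i j
  · exact integral_apply_mul_apply_eq_zero_of_indepFun (hZ h) (hmeas k i) (hmeas k' j)
      (hmean k i)

end SecondMoment

section StateSpaceModel

variable {Ω : Type*} {n l m N : ℕ}

def noiseVector (x0 : Ω → Fin n → ℝ) (w : Fin N → Ω → Fin l → ℝ) (v : Fin N → Ω → Fin m → ℝ)
    (ω : Ω) : Fin n ⊕ (Fin N × Fin l) ⊕ (Fin N × Fin m) → ℝ :=
  Sum.elim (x0 ω) (Sum.elim (fun t => w t.1 ω t.2) (fun t => v t.1 ω t.2))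

def gainMatrix (N : ℕ) (A : Matrix (Fin n) (Fin n) ℝ) (B : Matrix (Fin n) (Fin l) ℝ)
    (C : Matrix (Fin m) (Fin n) ℝ) :
    Matrix (Fin N × Fin m) (Fin n ⊕ (Fin N × Fin l) ⊕ (Fin N × Fin m)) ℝ :=
  fromCols (Omat N A C) (fromCols (Fmat N A B C) 1)

noncomputable def noiseCov (N : ℕ) (P : Matrix (Fin n) (Fin n) ℝ)
    (Q : Matrix (Fin l) (Fin l) ℝ) (R : Matrix (Fin m) (Fin m) ℝ) :
    Matrix (Fin n ⊕ (Fin N × Fin l) ⊕ (Fin N × Fin m))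
      (Fin n ⊕ (Fin N × Fin l) ⊕ (Fin N × Fin m)) ℝ :=
  fromBlocks P⁻¹ 0 0 (fromBlocks (Qinv N Q) 0 0 (Rinv N R))

lemma gainMatrix_mulVec_noiseVector (A : Matrix (Fin n) (Fin n) ℝ)
    (B : Matrix (Fin n) (Fin l) ℝ) (C : Matrix (Fin m) (Fin n) ℝ) (x0 : Ω → Fin n → ℝ)
    (w : Fin N → Ω → Fin l → ℝ) (v : Fin N → Ω → Fin m → ℝ) (ω : Ω) (k : Fin N) :
    (fun c => (gainMatrix N A B C *ᵥ noiseVector x0 w v ω) (k, c))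
      = (C * A ^ ((k : ℕ) + 1)) *ᵥ x0 ω
        + ∑ i ∈ Finset.univ.filter (fun i : Fin N => (i : ℕ) ≤ (k : ℕ)),
            (C * A ^ ((k : ℕ) - (i : ℕ)) * B) *ᵥ w i ω
        + v k ω := by
  ext c
  simp only [gainMatrix, noiseVector, fromCols_mulVec_sumElim, one_mulVec, Pi.add_apply,
    add_assoc]
  congr 1
  congr 1
  simp only [mulVec, dotProduct, Fmat, Finset.sum_apply, Fintype.sum_prod_type, Finset.sum_filter,
    ite_mul, zero_mul, Finset.sum_ite_irrel, Finset.sum_const_zero]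

lemma gainMatrix_mul_noiseCov_mul_transpose (A : Matrix (Fin n) (Fin n) ℝ)
    (B : Matrix (Fin n) (Fin l) ℝ) (C : Matrix (Fin m) (Fin n) ℝ) (P : Matrix (Fin n) (Fin n) ℝ)
    (Q : Matrix (Fin l) (Fin l) ℝ) (R : Matrix (Fin m) (Fin m) ℝ) :
    gainMatrix N A B C * noiseCov N P Q R * (gainMatrix N A B C)ᵀ
      = Fmat N A B C * Qinv N Q * (Fmat N A B C)ᵀ + Rinv N R
          + Omat N A C * P⁻¹ * (Omat N A C)ᵀ := by
  simp only [gainMatrix, noiseCov, fromCols_mul_fromBlocks, transpose_fromCols,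
    fromCols_mul_fromRows, Matrix.mul_zero, Matrix.one_mul, add_zero, zero_add, Matrix.mul_one,
    transpose_one]
  abel

variable [MeasurableSpace Ω] {μ : Measure Ω}

lemma secondMoment_noiseVector (P : Matrix (Fin n) (Fin n) ℝ) (Q : Matrix (Fin l) (Fin l) ℝ)
    (R : Matrix (Fin m) (Fin m) ℝ) {x0 : Ω → Fin n → ℝ} {w : Fin N → Ω → Fin l → ℝ}
    {v : Fin N → Ω → Fin m → ℝ}
    (hmeas : ∀ t, AEStronglyMeasurable (fun ω => noiseVector x0 w v ω t) μ)
    (hindep : iIndepFun (m := famMS n l m N) (fam x0 w v) μ)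
    (hx0mean : ∀ c, ∫ ω, x0 ω c ∂μ = 0)
    (hwmean : ∀ k c, ∫ ω, w k ω c ∂μ = 0)
    (hvmean : ∀ k c, ∫ ω, v k ω c ∂μ = 0)
    (hx0cov : ∀ c c', ∫ ω, x0 ω c * x0 ω c' ∂μ = P⁻¹ c c')
    (hwcov : ∀ k c c', ∫ ω, w k ω c * w k ω c' ∂μ = Q⁻¹ c c')
    (hvcov : ∀ k c c', ∫ ω, v k ω c * v k ω c' ∂μ = R⁻¹ c c') :
    secondMoment (noiseVector x0 w v) μ = noiseCov N P Q R := by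
  have hw : Pairwise fun k k' => IndepFun (w k) (w k') μ := fun k k' h =>
    hindep.indepFun (i := .inr (.inl k)) (j := .inr (.inl k')) (by simpa using h)
  have hv : Pairwise fun k k' => IndepFun (v k) (v k') μ := fun k k' h =>
    hindep.indepFun (i := .inr (.inr k)) (j := .inr (.inr k')) (by simpa using h)
  ext (c | ⟨k, c⟩ | ⟨k, c⟩) (c' | ⟨k', c'⟩ | ⟨k', c'⟩)
  · exact hx0cov c c'
  · exact integral_apply_mul_apply_eq_zero_of_indepFun
      (hindep.indepFun (i := .inl ()) (j := .inr (.inl k')) (by simp))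
      (hmeas (.inl c)) (hmeas (.inr (.inl (k', c')))) (hx0mean c)
  · exact integral_apply_mul_apply_eq_zero_of_indepFun
      (hindep.indepFun (i := .inl ()) (j := .inr (.inr k')) (by simp))
      (hmeas (.inl c)) (hmeas (.inr (.inr (k', c')))) (hx0mean c)
  · exact integral_apply_mul_apply_eq_zero_of_indepFun
      (hindep.indepFun (i := .inr (.inl k)) (j := .inl ()) (by simp))
      (hmeas (.inr (.inl (k, c)))) (hmeas (.inl c')) (hwmean k c)
  · exact integral_apply_mul_apply_eq_ite_of_pairwise_indepFun hw
      (fun k c => hmeas (.inr (.inl (k, c)))) hwmean hwcov k k' c c'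
  · exact integral_apply_mul_apply_eq_zero_of_indepFun
      (hindep.indepFun (i := .inr (.inl k)) (j := .inr (.inr k')) (by simp))
      (hmeas (.inr (.inl (k, c)))) (hmeas (.inr (.inr (k', c')))) (hwmean k c)
  · exact integral_apply_mul_apply_eq_zero_of_indepFun
      (hindep.indepFun (i := .inr (.inr k)) (j := .inl ()) (by simp))
      (hmeas (.inr (.inr (k, c)))) (hmeas (.inl c')) (hvmean k c)
  · exact integral_apply_mul_apply_eq_zero_of_indepFun
      (hindep.indepFun (i := .inr (.inr k)) (j := .inr (.inl k')) (by simp))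
      (hmeas (.inr (.inr (k, c)))) (hmeas (.inr (.inl (k', c')))) (hvmean k c)
  · exact integral_apply_mul_apply_eq_ite_of_pairwise_indepFun hv
      (fun k c => hmeas (.inr (.inr (k, c)))) hvmean hvcov k k' c c'

end StateSpaceModel

theorem measurement_covariance_eq_M_general
    (n l m N : ℕ)
    (A : Matrix (Fin n) (Fin n) ℝ) (B : Matrix (Fin n) (Fin l) ℝ)
    (C : Matrix (Fin m) (Fin n) ℝ)
    (P : Matrix (Fin n) (Fin n) ℝ) (Q : Matrix (Fin l) (Fin l) ℝ)
    (R : Matrix (Fin m) (Fin m) ℝ)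
    (Ω : Type*) [MeasurableSpace Ω] (μ : Measure Ω)
    (x0 : Ω → Fin n → ℝ) (w : Fin N → Ω → Fin l → ℝ) (v : Fin N → Ω → Fin m → ℝ)
    (hx0L2 : ∀ c, MemLp (fun ω => x0 ω c) 2 μ)
    (hwL2 : ∀ k c, MemLp (fun ω => w k ω c) 2 μ)
    (hvL2 : ∀ k c, MemLp (fun ω => v k ω c) 2 μ)
    (hindep : iIndepFun (m := famMS n l m N) (fam x0 w v) μ)
    (hx0mean : ∀ c, ∫ ω, x0 ω c ∂μ = 0)
    (hwmean : ∀ k c, ∫ ω, w k ω c ∂μ = 0)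
    (hvmean : ∀ k c, ∫ ω, v k ω c ∂μ = 0)
    (hx0cov : ∀ c c', ∫ ω, x0 ω c * x0 ω c' ∂μ = P⁻¹ c c')
    (hwcov : ∀ k c c', ∫ ω, w k ω c * w k ω c' ∂μ = Q⁻¹ c c')
    (hvcov : ∀ k c c', ∫ ω, v k ω c * v k ω c' ∂μ = R⁻¹ c c')
    (y : Fin N → Ω → Fin m → ℝ)
    (hy : ∀ (k : Fin N) (ω : Ω),
      y k ω = (C * A ^ ((k : ℕ) + 1)) *ᵥ x0 ω
        + ∑ i ∈ Finset.univ.filter (fun i : Fin N => (i : ℕ) ≤ (k : ℕ)),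
            (C * A ^ ((k : ℕ) - (i : ℕ)) * B) *ᵥ w i ω
        + v k ω) :
    ∀ p q : Fin N × Fin m,
      ∫ ω, y p.1 ω p.2 * y q.1 ω q.2 ∂μ
        = (Fmat N A B C * Qinv N Q * (Fmat N A B C)ᵀ + Rinv N R
            + Omat N A C * P⁻¹ * (Omat N A C)ᵀ) p q := by
  intro p q
  have hL2 : ∀ t, MemLp (fun ω => noiseVector x0 w v ω t) 2 μ := by
    rintro (c | ⟨k, c⟩ | ⟨k, c⟩)
    exacts [hx0L2 c, hwL2 k c, hvL2 k c]
  have hy_gain : (fun ω (p : Fin N × Fin m) => y p.1 ω p.2)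
      = fun ω => gainMatrix N A B C *ᵥ noiseVector x0 w v ω := by
    ext ω ⟨k, c⟩
    rw [hy, ← gainMatrix_mulVec_noiseVector]
  calc ∫ ω, y p.1 ω p.2 * y q.1 ω q.2 ∂μ
      = secondMoment (fun ω (p : Fin N × Fin m) => y p.1 ω p.2) μ p q := rfl
    _ = (gainMatrix N A B C * noiseCov N P Q R * (gainMatrix N A B C)ᵀ) p q := by
      rw [hy_gain, secondMoment_mulVec hL2, secondMoment_noiseVector P Q R
        (fun t => (hL2 t).aestronglyMeasurable) hindep hx0mean hwmean hvmean hx0cov hwcov hvcov]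
    _ = _ := by rw [gainMatrix_mul_noiseCov_mul_transpose]

/-- **`E[y yᵀ] = M`**: if `x_0`, the `w_k` and the `v_k` are mutually independent,
square-integrable, zero-mean random vectors with second moments `P⁻¹`, `Q⁻¹`, `R⁻¹`, and
`y_k = C A^k x_0 + Σ_{i=0}^{k−1} C A^{k−1−i} B w_i + v_k`, then the second-moment matrix of the
stacked measurement vector is `M = F Q_inv Fᵀ + R_inv + O P⁻¹ Oᵀ`. -/
theorem measurement_covariance_eq_M
    (n l m N : ℕ) (hN : 1 ≤ N)
    (A : Matrix (Fin n) (Fin n) ℝ) (B : Matrix (Fin n) (Fin l) ℝ)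
    (C : Matrix (Fin m) (Fin n) ℝ)
    (P : Matrix (Fin n) (Fin n) ℝ) (Q : Matrix (Fin l) (Fin l) ℝ)
    (R : Matrix (Fin m) (Fin m) ℝ)
    (hP : IsUnit P.det) (hQ : IsUnit Q.det) (hR : IsUnit R.det)
    (Ω : Type*) [MeasurableSpace Ω] (μ : Measure Ω) [IsProbabilityMeasure μ]
    (x0 : Ω → Fin n → ℝ) (w : Fin N → Ω → Fin l → ℝ) (v : Fin N → Ω → Fin m → ℝ)
    (hx0meas : Measurable x0) (hwmeas : ∀ k, Measurable (w k)) (hvmeas : ∀ k, Measurable (v k))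
    (hx0L2 : ∀ c, MemLp (fun ω => x0 ω c) 2 μ)
    (hwL2 : ∀ k c, MemLp (fun ω => w k ω c) 2 μ)
    (hvL2 : ∀ k c, MemLp (fun ω => v k ω c) 2 μ)
    (hindep : iIndepFun (m := famMS n l m N) (fam x0 w v) μ)
    (hx0mean : ∀ c, ∫ ω, x0 ω c ∂μ = 0)
    (hwmean : ∀ k c, ∫ ω, w k ω c ∂μ = 0)
    (hvmean : ∀ k c, ∫ ω, v k ω c ∂μ = 0)
    (hx0cov : ∀ c c', ∫ ω, x0 ω c * x0 ω c' ∂μ = P⁻¹ c c')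
    (hwcov : ∀ k c c', ∫ ω, w k ω c * w k ω c' ∂μ = Q⁻¹ c c')
    (hvcov : ∀ k c c', ∫ ω, v k ω c * v k ω c' ∂μ = R⁻¹ c c')
    (y : Fin N → Ω → Fin m → ℝ)
    (hy : ∀ (k : Fin N) (ω : Ω),
      y k ω = (C * A ^ ((k : ℕ) + 1)) *ᵥ x0 ω
        + ∑ i ∈ Finset.univ.filter (fun i : Fin N => (i : ℕ) ≤ (k : ℕ)),
            (C * A ^ ((k : ℕ) - (i : ℕ)) * B) *ᵥ w i ω
        + v k ω) :
    ∀ p q : Fin N × Fin m,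
      ∫ ω, y p.1 ω p.2 * y q.1 ω q.2 ∂μ
        = (Fmat N A B C * Qinv N Q * (Fmat N A B C)ᵀ + Rinv N R
            + Omat N A C * P⁻¹ * (Omat N A C)ᵀ) p q :=
  measurement_covariance_eq_M_general n l m N A B C P Q R Ω μ x0 w v hx0L2 hwL2 hvL2 hindep hx0mean
    hwmean hvmean hx0cov hwcov hvcov y hy
end
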